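/- In the on module policy (rules r0–r13), each full pass of the outer loop strictly decreases the lexicographic measure (|N|, total number of blocks above blocks in X ∪ Y), where N is the set of non-clear blocks among X ∪ Y: each execution of Unstack(r1, B) followed by Putdown(r1) (rules r9, r10) removes the topmost block of a tower above a block in X ∪ Y and places it on the table, strictly decreasing the number of blocks above X ∪ Y; hence the policy clears X ∪ Y in finitely many steps. -/

import Mathlib

/-- Location of a block: on another block, on the table, or held by the gripper. -/
inductive Loc (Block : Type) where
  | on (b : Block)
  | table
  | held
deriving DecidableEq

/-- A Blocksworld state: the location of every block. -/
structure BWState (Block : Type) where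
  loc : Block → Loc Block

variable {Block : Type} [DecidableEq Block]

/-- A block is clear: no block is on it and it is not held. -/
def Clear (s : BWState Block) (b : Block) : Prop :=
  (∀ z : Block, s.loc z ≠ Loc.on b) ∧ s.loc b ≠ Loc.held

def GripperEmpty (s : BWState Block) : Prop := ∀ z : Block, s.loc z ≠ Loc.held

def UnstackStep (s s' : BWState Block) (z w : Block) : Prop :=
  Clear s z ∧ s.loc z = Loc.on w ∧ GripperEmpty s ∧
  s'.loc = Function.update s.loc z Loc.held

def PutdownStep (s s' : BWState Block) (z : Block) : Prop :=
  s.loc z = Loc.held ∧ s'.loc = Function.update s.loc z Loc.table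

/-- `z` is (transitively) above `b` in state `s`. -/
def Above (s : BWState Block) (z b : Block) : Prop :=
  Relation.TransGen (fun a c : Block => s.loc a = Loc.on c) z b

/-- The concept N: blocks among X ∪ Y = {x, y} that are not clear. -/
def NSet (s : BWState Block) (x y : Block) : Set Block :=
  {b | (b = x ∨ b = y) ∧ ¬ Clear s b}

/-- The number of blocks (transitively) above `x` or above `y`. -/
noncomputable def aboveCount (s : BWState Block) (x y : Block) : ℕ :=
  {z : Block | Above s z x ∨ Above s z y}.ncard

/-- One full pass of the outer loop of the `on` module (rules r9, r10): the
topmost block `z` of a tower above a block in X ∪ Y is unstacked from `w` and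
put down on the table. -/
def Pass (x y : Block) (s s2 : BWState Block) : Prop :=
  ∃ (z w : Block) (s1 : BWState Block),
    (Above s z x ∨ Above s z y) ∧ z ≠ x ∧ z ≠ y ∧
    UnstackStep s s1 z w ∧ PutdownStep s1 s2 z

omit [DecidableEq Block] in
theorem Above.exists_loc_eq_on {s : BWState Block} {z b : Block} (h : Above s z b) :
    ∃ c, s.loc z = Loc.on c := by
  induction h with
  | single h => exact ⟨_, h⟩
  | tail _ _ ih => exact ih

namespace Pass

variable {x y : Block} {s s2 : BWState Block}

theorem exists_loc_eq_update (h : Pass x y s s2) :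
    ∃ z, (Above s z x ∨ Above s z y) ∧ s2.loc = Function.update s.loc z Loc.table := by
  obtain ⟨z, w, s1, hab, -, -, ⟨-, -, -, h1⟩, ⟨-, h2⟩⟩ := h
  exact ⟨z, hab, by rw [h2, h1, Function.update_idem]⟩

theorem loc_eq_on_of_loc_eq_on (h : Pass x y s s2) {a c : Block}
    (hac : s2.loc a = Loc.on c) : s.loc a = Loc.on c := by
  obtain ⟨z, -, hloc⟩ := h.exists_loc_eq_update
  rw [hloc] at hac
  rcases eq_or_ne a z with rfl | haz
  · simp at hac
  · rwa [Function.update_of_ne haz] at hac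

theorem above_ssubset (h : Pass x y s s2) :
    {z | Above s2 z x ∨ Above s2 z y} ⊂ {z | Above s z x ∨ Above s z y} := by
  have mono : ∀ b, (Above s2 · b) ≤ (Above s · b) := fun _ _ =>
    Relation.TransGen.mono (fun _ _ => h.loc_eq_on_of_loc_eq_on) _ _
  obtain ⟨z, hab, hloc⟩ := h.exists_loc_eq_update
  refine Set.ssubset_iff_of_subset (fun a ha => ha.imp (mono x a) (mono y a)) |>.2 ⟨z, hab, ?_⟩
  -- the moved block now stands on the table, so it is above nothing
  have hz : s2.loc z = Loc.table := by simp [hloc]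
  rintro (hz' | hz') <;> simpa [hz] using hz'.exists_loc_eq_on

theorem nSet_subset (h : Pass x y s s2) : NSet s2 x y ⊆ NSet s x y := by
  obtain ⟨z, -, hloc⟩ := h.exists_loc_eq_update
  rintro b ⟨hb, hnclear⟩
  refine ⟨hb, fun ⟨hfree, hnheld⟩ => hnclear ⟨fun a ha => hfree a (h.loc_eq_on_of_loc_eq_on ha), ?_⟩⟩
  rcases eq_or_ne b z with rfl | hbz
  · simp [hloc]
  · rwa [hloc, Function.update_of_ne hbz]

theorem aboveCount_lt [Finite Block] (h : Pass x y s s2) :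
    aboveCount s2 x y < aboveCount s x y :=
  Set.ncard_lt_ncard h.above_ssubset (Set.toFinite _)

theorem measure_lex_lt [Finite Block] (h : Pass x y s s2) :
    Prod.Lex (· < ·) (· < ·)
      ((NSet s2 x y).ncard, aboveCount s2 x y) ((NSet s x y).ncard, aboveCount s x y) := by
  rcases (Set.ncard_le_ncard h.nSet_subset (Set.toFinite _)).lt_or_eq with hlt | heq
  · exact Prod.Lex.left _ _ hlt
  · exact heq ▸ Prod.Lex.right _ h.aboveCount_lt

end Pass

theorem stmt15_general [Fintype Block] (x y : Block) :
    (∀ s s2 : BWState Block, Pass x y s s2 →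
      aboveCount s2 x y < aboveCount s x y ∧
      Prod.Lex (· < ·) (· < ·)
        ((NSet s2 x y).ncard, aboveCount s2 x y)
        ((NSet s x y).ncard, aboveCount s x y)) ∧
    ¬ ∃ g : ℕ → BWState Block, ∀ i : ℕ, Pass x y (g i) (g (i + 1)) :=
  ⟨fun _ _ h => ⟨h.aboveCount_lt, h.measure_lex_lt⟩, fun ⟨g, hg⟩ =>
    not_strictAnti_of_wellFoundedLT (fun i => aboveCount (g i) x y)
      (strictAnti_nat_of_succ_lt fun i => (hg i).aboveCount_lt)⟩

/-- in the `on` module policy, each full pass of the outer loop —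
`Unstack(r1, B)` followed by `Putdown(r1)`, removing the topmost block of a
tower above a block in X ∪ Y = {x, y} and placing it on the table — strictly
decreases the number of blocks above X ∪ Y, hence strictly decreases the
lexicographic measure (|N|, number of blocks above X ∪ Y), where N is the set of
non-clear blocks among X ∪ Y; consequently there is no infinite sequence of such
passes and the policy clears X ∪ Y in finitely many steps. -/
theorem stmt15 [Fintype Block] (x y : Block) (hxy : x ≠ y) :
    (∀ s s2 : BWState Block, Pass x y s s2 →
      aboveCount s2 x y < aboveCount s x y ∧
      Prod.Lex (· < ·) (· < ·)
        ((NSet s2 x y).ncard, aboveCount s2 x y)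
        ((NSet s x y).ncard, aboveCount s x y)) ∧
    ¬ ∃ g : ℕ → BWState Block, ∀ i : ℕ, Pass x y (g i) (g (i + 1)) :=
  stmt15_general x y
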